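/- Let (X, r) be a non-degenerate involutive set-theoretic solution of the Yang–Baxter equation with |X| = m ≥ 2 and let n ≥ 2. Then the number of orbits (equivalence classes of X^n under ∼) is binomial(n+m−1, m−1). -/
import Mathlib


/-! Set-theoretic solutions of the Yang–Baxter equation.
For `r : X × X → X × X` we write `r (i, j) = (σ i j, τ j i)`, i.e. `σ_i(j) = σ i j` and
`τ_j(i) = τ j i`. -/

variable {X : Type*}

/-- The map `r : X × X → X × X` determined by families `σ`, `τ` via
`r (i, j) = (σ_i(j), τ_j(i))`. -/
def rmapF (σ τ : X → X → X) : X × X → X × X := fun p => (σ p.1 p.2, τ p.2 p.1)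

/-- `r × id` on `X × X × X`. -/
def ridF (r : X × X → X × X) : X × X × X → X × X × X :=
  fun p => ((r (p.1, p.2.1)).1, (r (p.1, p.2.1)).2, p.2.2)

/-- `id × r` on `X × X × X`. -/
def idrF (r : X × X → X × X) : X × X × X → X × X × X := fun p => (p.1, r p.2)

/-- The braid (Yang–Baxter) equation `(r × id) ∘ (id × r) ∘ (r × id) = (id × r) ∘ (r × id) ∘ (id × r)`. -/
def BraidEq (r : X × X → X × X) : Prop :=
  ridF r ∘ idrF r ∘ ridF r = idrF r ∘ ridF r ∘ idrF r

/-- A non-degenerate involutive set-theoretic solution of the Yang–Baxter equation on `X`: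
the maps `σ_i` and `τ_i` are bijective (packaged as equivalences), the induced map
`r (i, j) = (σ_i(j), τ_j(i))` satisfies the braid equation, and `r ∘ r = id`
(which in particular makes `r` bijective). -/
structure NDIS (X : Type*) where
  σ : X → X ≃ X
  τ : X → X ≃ X
  braid : BraidEq (rmapF (fun i => ⇑(σ i)) (fun i => ⇑(τ i)))
  invol : ∀ p : X × X,
    rmapF (fun i => ⇑(σ i)) (fun i => ⇑(τ i))
      (rmapF (fun i => ⇑(σ i)) (fun i => ⇑(τ i)) p) = p

namespace NDIS

/-- The map `r` of the solution. -/
def r (S : NDIS X) : X × X → X × X := rmapF (fun i => ⇑(S.σ i)) (fun i => ⇑(S.τ i))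

/-- The diagonal `D : X → X`, `D(i) = τ_i⁻¹(i)`. -/
def D (S : NDIS X) : X → X := fun i => (S.τ i).symm i

end NDIS
namespace NDIS

/-- One elementary move on words: apply `r` to two adjacent letters. -/
def Step (S : NDIS X) (x y : List X) : Prop :=
  ∃ (u v : List X) (i j : X), x = u ++ i :: j :: v ∧ y = u ++ S.σ i j :: S.τ j i :: v

/-- The orbit `O(x)` of a word `x` under the equivalence relation generated by the
adjacent `r`-moves (equivalently, the orbit of the induced `S_n`-action on `X^n`). -/
def Orb (S : NDIS X) (x : List X) : Set (List X) := {y | Relation.EqvGen S.Step x y}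

/-- `Ψ_k(a) = (D^{k−1}(a), …, D(a), a)`. -/
def Psi (S : NDIS X) (k : ℕ) (a : X) : List X :=
  (List.range k).map fun t => S.D^[k - 1 - t] a

/-- The inverse of the diagonal `D`. -/
noncomputable def Dinv (S : NDIS X) [Nonempty X] : X → X := Function.invFun S.D

/-- `Ψ_{−k}(a) = (a, D^{−1}(a), …, D^{−(k−1)}(a))`. -/
noncomputable def PsiNeg (S : NDIS X) [Nonempty X] (k : ℕ) (a : X) : List X :=
  (List.range k).map fun t => S.Dinv^[t] a

/-- `σ_x = σ_{a_1} ∘ σ_{a_2} ∘ ⋯ ∘ σ_{a_k}` for a word `x = (a_1, …, a_k)`. -/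
def sigmaWord (S : NDIS X) (x : List X) (z : X) : X := x.foldr (fun a w => S.σ a w) z

/-- `τ_x = τ_{a_k} ∘ ⋯ ∘ τ_{a_2} ∘ τ_{a_1}` for a word `x = (a_1, …, a_k)`. -/
def tauWord (S : NDIS X) (x : List X) (z : X) : X := x.foldl (fun w a => S.τ a w) z

/-- The concatenation `Ψ_{L 0}(a 0) Ψ_{L 1}(a 1) ⋯ Ψ_{L (k-1)}(a (k-1))`. -/
def word (S : NDIS X) {k : ℕ} (L : Fin k → ℕ) (a : Fin k → X) : List X :=
  (List.ofFn fun t => S.Psi (L t) (a t)).flatten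

/-- The concatenation `Ψ_{L (i+1)}(a (i+1)) ⋯ Ψ_{L (j-1)}(a (j-1))` of the blocks strictly
between positions `i` and `j` (the empty word when `j = i + 1`). -/
def midword (S : NDIS X) {k : ℕ} (L : Fin k → ℕ) (a : Fin k → X) (i j : Fin k) : List X :=
  (((List.ofFn fun t => S.Psi (L t) (a t)).drop ((i : ℕ) + 1)).take ((j : ℕ) - (i : ℕ) - 1)).flatten

/-- The family `a` yields a `λ`-element: `a_j ≠ D^{−λ_j}(τ_w(a_i))` for all `i < j`, with
`w = Ψ_{λ_{i+1}}(a_{i+1}) ⋯ Ψ_{λ_{j−1}}(a_{j−1})`. -/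
def IsLambdaFamily (S : NDIS X) [Nonempty X] {k : ℕ} (L : Fin k → ℕ) (a : Fin k → X) : Prop :=
  ∀ i j : Fin k, i < j →
    a j ≠ S.Dinv^[L j] (S.tauWord (S.midword L a i j) (a i))

/-- `x` is a `λ`-element for the partition with positive parts `L 0 ≥ L 1 ≥ ⋯ ≥ L (k-1) > 0`. -/
def IsLambdaWord (S : NDIS X) [Nonempty X] {k : ℕ} (L : Fin k → ℕ) (x : List X) : Prop :=
  ∃ a : Fin k → X, x = S.word L a ∧ S.IsLambdaFamily L a

/-- The bijection `b` of `X^n` applying `r` to the entries in (0-based) positions `j` and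
`j + 1` and fixing all other entries. -/
def bmap (S : NDIS X) {n : ℕ} (j : ℕ) (hj : j + 1 < n) (x : Fin n → X) : Fin n → X :=
  fun t =>
    if (t : ℕ) = j then S.σ (x ⟨j, by omega⟩) (x ⟨j + 1, hj⟩)
    else if (t : ℕ) = j + 1 then S.τ (x ⟨j + 1, hj⟩) (x ⟨j, by omega⟩)
    else x t

/-- One elementary move on `X^n` (as functions `Fin n → X`). -/
def StepF (S : NDIS X) {n : ℕ} (x y : Fin n → X) : Prop :=
  ∃ (j : ℕ) (hj : j + 1 < n), y = S.bmap j hj x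

end NDIS

namespace NDIS
variable (S : NDIS X)

lemma tau_rel (i j w : X) :
    S.τ (S.τ j i) (S.τ (S.σ i j) w) = S.τ j (S.τ i w) := by
  have h := congrFun S.braid (w, i, j)
  simpa [BraidEq, rmapF, ridF, idrF, Prod.ext_iff] using (congrArg (fun p => p.2.2) h).symm

lemma invol_sigma (i j : X) : S.σ (S.σ i j) (S.τ j i) = i := by
  have h := S.invol (i, j)
  rw [Prod.ext_iff] at h
  simpa [rmapF] using h.1

lemma invol_tau (i j : X) : S.τ (S.τ j i) (S.σ i j) = j := by
  have h := S.invol (i, j)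
  rw [Prod.ext_iff] at h
  simpa [rmapF] using h.2

lemma tauWord_nil (z : X) : S.tauWord [] z = z := rfl
lemma tauWord_cons (a : X) (l : List X) (z : X) :
    S.tauWord (a :: l) z = S.tauWord l (S.τ a z) := rfl
lemma tauWord_append (u v : List X) (z : X) :
    S.tauWord (u ++ v) z = S.tauWord v (S.tauWord u z) := by
  simp [tauWord, List.foldl_append]

/-- tauWord as an equivalence. -/
def tauWordE (S : NDIS X) : List X → (X ≃ X)
  | [] => Equiv.refl X
  | a :: l => (S.τ a).trans (tauWordE S l)

lemma tauWordE_coe (l : List X) (z : X) : S.tauWordE l z = S.tauWord l z := by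
  induction l generalizing z with
  | nil => rfl
  | cons a l ih => simp [tauWordE, tauWord_cons, ih]

lemma tauWord_inj (l : List X) : Function.Injective (S.tauWord l ·) := by
  intro a b h
  have : S.tauWordE l a = S.tauWordE l b := by rw [tauWordE_coe, tauWordE_coe]; exact h
  exact (S.tauWordE l).injective this

lemma tauWord_surj (l : List X) : Function.Surjective (S.tauWord l ·) := by
  intro b
  refine ⟨(S.tauWordE l).symm b, ?_⟩
  show S.tauWord l _ = b
  rw [← tauWordE_coe]; simp

/-- The key swap identity for tauWord. -/
lemma tauWord_swap (i j : X) (v : List X) (z : X) :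
    S.tauWord (S.σ i j :: S.τ j i :: v) z = S.tauWord (i :: j :: v) z := by
  simp only [tauWord_cons]
  rw [tau_rel]

/-- The guitar map. -/
def J (S : NDIS X) : List X → List X
  | [] => []
  | a :: l => S.tauWord l a :: S.J l

lemma J_length (x : List X) : (S.J x).length = x.length := by
  induction x with
  | nil => rfl
  | cons a l ih => simp [J, ih]

lemma J_inj : Function.Injective S.J := by
  intro x y h
  induction x generalizing y with
  | nil => cases y with
    | nil => rfl
    | cons b m => simp [J] at h
  | cons a l ih =>
    cases y with
    | nil => simp [J] at h
    | cons b m =>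
      simp only [J, List.cons.injEq] at h
      have hm : l = m := ih h.2
      subst hm
      exact by rw [S.tauWord_inj l h.1]

lemma J_surj (t : List X) : ∃ x : List X, S.J x = t := by
  induction t with
  | nil => exact ⟨[], rfl⟩
  | cons b m ih =>
    obtain ⟨l, hl⟩ := ih
    obtain ⟨a, ha⟩ := S.tauWord_surj l b
    exact ⟨a :: l, by simp [J, ha, hl]⟩


lemma tauWord_step {x y : List X} (h : S.Step x y) (z : X) :
    S.tauWord x z = S.tauWord y z := by
  obtain ⟨u, v, i, j, hx, hy⟩ := h
  subst hx; subst hy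
  rw [tauWord_append, tauWord_append, tauWord_swap]

lemma tauWord_eqv {x y : List X} (h : Relation.EqvGen S.Step x y) (z : X) :
    S.tauWord x z = S.tauWord y z := by
  induction h with
  | rel a b hab => exact S.tauWord_step hab z
  | refl a => rfl
  | symm a b _ ih => exact (ih).symm
  | trans a b c _ _ ih1 ih2 => exact (ih1).trans (ih2)

lemma J_swap (i j : X) (v : List X) :
    S.J (S.σ i j :: S.τ j i :: v) = S.tauWord v j :: S.tauWord v (S.τ j i) :: S.J v := by
  simp only [J, tauWord_cons]
  rw [invol_tau]

lemma J_cons_swap_perm (i j : X) (v : List X) :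
    (S.J (i :: j :: v)).Perm (S.J (S.σ i j :: S.τ j i :: v)) := by
  rw [J_swap]
  simp only [J, tauWord_cons]
  exact List.Perm.swap _ _ _

lemma J_step_perm {x y : List X} (h : S.Step x y) : (S.J x).Perm (S.J y) := by
  obtain ⟨u, v, i, j, hx, hy⟩ := h
  subst hx; subst hy
  induction u with
  | nil => exact S.J_cons_swap_perm i j v
  | cons c u ih =>
    simp only [List.cons_append, J, List.append_eq]
    have hw : S.tauWord (u ++ i :: j :: v) c
        = S.tauWord (u ++ S.σ i j :: S.τ j i :: v) c := by
      rw [tauWord_append, tauWord_append, tauWord_swap]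
    rw [hw]
    exact List.Perm.cons _ ih

lemma J_eqv_perm {x y : List X} (h : Relation.EqvGen S.Step x y) :
    (S.J x).Perm (S.J y) := by
  induction h with
  | rel a b hab => exact S.J_step_perm hab
  | refl a => exact List.Perm.refl _
  | symm a b _ ih => exact ih.symm
  | trans a b c _ _ ih1 ih2 => exact ih1.trans ih2

lemma step_cons {x y : List X} (c : X) (h : S.Step x y) : S.Step (c :: x) (c :: y) := by
  obtain ⟨u, v, i, j, hx, hy⟩ := h
  exact ⟨c :: u, v, i, j, by simp [hx], by simp [hy]⟩

lemma eqv_cons {x y : List X} (c : X) (h : Relation.EqvGen S.Step x y) :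
    Relation.EqvGen S.Step (c :: x) (c :: y) := by
  induction h with
  | rel a b hab => exact Relation.EqvGen.rel _ _ (S.step_cons c hab)
  | refl a => exact Relation.EqvGen.refl _
  | symm a b _ ih => exact Relation.EqvGen.symm _ _ ih
  | trans a b c' _ _ ih1 ih2 => exact Relation.EqvGen.trans _ _ _ ih1 ih2

/-- Main inverse direction: if `J x` is a permutation of `t`, then some `y` in the orbit of `x`
has `J y = t`. -/
lemma perm_eqv : ∀ {s t : List X}, s.Perm t → ∀ x : List X, S.J x = s →
    ∃ y : List X, S.J y = t ∧ Relation.EqvGen S.Step x y := by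
  intro s t h
  induction h with
  | nil => exact fun x hx => ⟨x, hx, Relation.EqvGen.refl _⟩
  | cons a h ih =>
    rename_i s t
    intro x hx
    cases x with
    | nil => simp [J] at hx
    | cons c l =>
      simp only [J, List.cons.injEq] at hx
      obtain ⟨y', hy', hey⟩ := ih l hx.2
      refine ⟨c :: y', ?_, S.eqv_cons c hey⟩
      simp only [J, List.cons.injEq]
      refine ⟨?_, hy'⟩
      rw [← S.tauWord_eqv hey c, hx.1]
  | swap a b s =>
    intro x hx
    cases x with
    | nil => simp [J] at hx
    | cons i x' =>
      cases x' with
      | nil => simp [J] at hx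
      | cons j l =>
        simp only [J, List.cons.injEq, tauWord_cons] at hx
        refine ⟨S.σ i j :: S.τ j i :: l, ?_, Relation.EqvGen.rel _ _ ⟨[], l, i, j, rfl, rfl⟩⟩
        rw [J_swap]
        simp only [List.cons.injEq]
        exact ⟨hx.2.1, hx.1, hx.2.2⟩
  | trans h1 h2 ih1 ih2 =>
    intro x hx
    obtain ⟨y, hy, he⟩ := ih1 x hx
    obtain ⟨z, hz, he'⟩ := ih2 y hy
    exact ⟨z, hz, Relation.EqvGen.trans _ _ _ he he'⟩

/-- Orbit characterization via the multiset of the guitar image. -/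
lemma orb_eq_preimage (x : List X) :
    S.Orb x = {y : List X | (S.J y : Multiset X) = (S.J x : Multiset X)} := by
  ext y
  simp only [Orb, Set.mem_setOf_eq]
  constructor
  · intro h
    exact Quotient.sound (S.J_eqv_perm h).symm
  · intro h
    have hperm : (S.J x).Perm (S.J y) := Quotient.exact h.symm
    obtain ⟨y', hy', he⟩ := S.perm_eqv hperm x rfl
    rwa [S.J_inj hy'] at he

end NDIS

/-- The offset `λ_1 + ⋯ + λ_i` of the `i`-th block (0-based). -/
def blockOffset {k : ℕ} (L : Fin k → ℕ) (i : Fin k) : ℕ :=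
  ∑ t ∈ Finset.univ.filter (fun t => t < i), L t

/-- A `(λ_1, …, λ_k)`-shuffle: a permutation strictly increasing on each consecutive block. -/
def IsShuffle {k n : ℕ} (L : Fin k → ℕ) (θ : Equiv.Perm (Fin n)) : Prop :=
  ∀ (i : Fin k) (p q : Fin n), blockOffset L i ≤ (p : ℕ) → p < q →
    (q : ℕ) < blockOffset L i + L i → θ p < θ q

/-- Let `(X, r)` be a non-degenerate involutive solution with `|X| = m ≥ 2`
and `n ≥ 2`. Then the number of orbits (equivalence classes of `X^n` under `∼`) is
`binomial(n + m − 1, m − 1)`. -/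
theorem card_orbits {X : Type*} [Fintype X] [Nonempty X]
    (S : NDIS X) (hm : 2 ≤ Fintype.card X) (n : ℕ) (hn : 2 ≤ n) :
    {C : Set (List X) | ∃ x : List X, x.length = n ∧ C = S.Orb x}.ncard =
      (n + Fintype.card X - 1).choose (Fintype.card X - 1) := by
  classical
  set m := Fintype.card X with hmdef
  set F : Multiset X → Set (List X) :=
    fun M => {y : List X | (S.J y : Multiset X) = M} with hF
  -- surjectivity of μ onto multisets of card n
  have hsurj : ∀ M : Multiset X, ∃ x : List X, (S.J x : Multiset X) = M := by
    intro M
    obtain ⟨x, hx⟩ := S.J_surj M.toList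
    exact ⟨x, by rw [hx, Multiset.coe_toList]⟩
  have hset : {C : Set (List X) | ∃ x : List X, x.length = n ∧ C = S.Orb x}
      = F '' {M : Multiset X | Multiset.card M = n} := by
    ext C
    simp only [Set.mem_setOf_eq, Set.mem_image]
    constructor
    · rintro ⟨x, hlen, rfl⟩
      refine ⟨(S.J x : Multiset X), ?_, ?_⟩
      · simp only [Set.mem_setOf_eq, Multiset.coe_card]
        rw [S.J_length, hlen]
      · rw [S.orb_eq_preimage]
    · rintro ⟨M, hM, rfl⟩
      obtain ⟨x, hx⟩ := hsurj M
      refine ⟨x, ?_, ?_⟩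
      · have := congrArg Multiset.card hx
        simp only [Multiset.coe_card, S.J_length] at this
        rw [this]; exact hM
      · rw [S.orb_eq_preimage, hx]
    
  have hinj : Set.InjOn F {M : Multiset X | Multiset.card M = n} := by
    intro M hM M' hM' hFF
    obtain ⟨x, hx⟩ := hsurj M
    have hx1 : x ∈ F M := hx
    rw [hFF] at hx1
    rw [← hx, hx1]
  rw [hset, Set.ncard_image_of_injOn hinj]
  have e : ↥{M : Multiset X | Multiset.card M = n} ≃ Sym X n :=
    ⟨fun x => ⟨x.1, x.2⟩, fun s => ⟨s.1, s.2⟩, fun _ => rfl, fun _ => rfl⟩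
  have hcard : {M : Multiset X | Multiset.card M = n}.ncard = Fintype.card (Sym X n) := by
    rw [← Nat.card_coe_set_eq, Nat.card_congr e, Nat.card_eq_fintype_card]
  rw [hcard, Sym.card_sym_eq_choose]
  have h1 : m + n - 1 = n + m - 1 := by omega
  rw [h1]
  have h3 : (n + m - 1).choose (m - 1) = (n + m - 1).choose n := by
    rw [← Nat.choose_symm (show m - 1 ≤ n + m - 1 by omega)]
    congr 1
    omega
  exact h3.symm
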